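/- In a proof net, if two vertices v and w are joined by a tensor (i.e. they are the two immediate subformula roots of a tensor), then any subnet having v as a port and any subnet having w as a port are disjoint. -/

import Mathlib

namespace MLL

/-- Formulas of unit-only MLL, with every connective and unit occurrence
carrying a name (a natural number). -/
inductive Formula : Type
  | one : ℕ → Formula
  | bot : ℕ → Formula
  | parr : ℕ → Formula → Formula → Formula
  | tens : ℕ → Formula → Formula → Formula
deriving DecidableEq

namespace Formula

/-- The name of the root connective/unit of a formula. -/
def name : Formula → ℕ
  | one n => n
  | bot n => n
  | parr n _ _ => n
  | tens n _ _ => n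

/-- All names occurring in a formula. -/
def names : Formula → Finset ℕ
  | one n => {n}
  | bot n => {n}
  | parr n A B => insert n (A.names ∪ B.names)
  | tens n A B => insert n (A.names ∪ B.names)

/-- All subformula occurrences of a formula. -/
def subs : Formula → List Formula
  | one n => [one n]
  | bot n => [bot n]
  | parr n A B => parr n A B :: (A.subs ++ B.subs)
  | tens n A B => tens n A B :: (A.subs ++ B.subs)

end Formula

/-- A sequent is a multiset of (named) formulas. -/
abbrev Sequent := Multiset Formula

/-- The names occurring in a sequent. -/
def seqNames (Γ : Sequent) : Finset ℕ := (Γ.map Formula.names).sup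

/-- The subformula occurrences of a sequent. -/
def seqSubs (Γ : Sequent) : Multiset Formula :=
  Γ.bind (fun A => (A.subs : Multiset Formula))

/-- `A` is a subformula occurrence of `Γ`. -/
def HasSub (Γ : Sequent) (A : Formula) : Prop := A ∈ seqSubs Γ

/-- `a` is the name of a `⊥`-occurrence of `Γ`. -/
def IsBotName (Γ : Sequent) (a : ℕ) : Prop := HasSub Γ (.bot a)

/-- `a` is the name of a `1`-occurrence of `Γ`. -/
def IsOneName (Γ : Sequent) (a : ℕ) : Prop := HasSub Γ (.one a)

/-- The sequent is well-named: all occurrences carry pairwise distinct names. -/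
def WellNamed (Γ : Sequent) : Prop := ((seqSubs Γ).map Formula.name).Nodup

/-- A linking: a function assigning to (the name of) each `⊥`-occurrence
a target name (the jump). -/
abbrev Linking := ℕ → ℕ

/-- A switching: a choice of left/right for each par occurrence. -/
abbrev Switching := ℕ → Bool

/-- The linking sends (names of) `⊥`-occurrences to names of `Γ`. -/
def ValidLinking (Γ : Sequent) (lk : Linking) : Prop :=
  ∀ a, IsBotName Γ a → lk a ∈ seqNames Γ

/-- The edges of the switching graph for `Γ`, `lk` and the switching `σ`. -/
def switchAdj (Γ : Sequent) (lk : Linking) (σ : Switching) (x y : ℕ) : Prop :=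
  (∃ A B, HasSub Γ (.tens x A B) ∧ (y = A.name ∨ y = B.name)) ∨
  (∃ A B, HasSub Γ (.parr x A B) ∧ y = (if σ x then A.name else B.name)) ∨
  (IsBotName Γ x ∧ y = lk x)

/-- The switching graph for `Γ`, `lk` and `σ`. -/
def switchGraph (Γ : Sequent) (lk : Linking) (σ : Switching) : SimpleGraph ℕ :=
  SimpleGraph.fromRel (switchAdj Γ lk σ)

/-- Correctness of a linking: every switching graph (restricted to the names of `Γ`)
is acyclic and connected, i.e. a tree.  `(Γ, lk)` is a proof net iff `Correct Γ lk`. -/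
def Correct (Γ : Sequent) (lk : Linking) : Prop :=
  ValidLinking Γ lk ∧
  ∀ σ : Switching, ((switchGraph Γ lk σ).induce {x : ℕ | x ∈ seqNames Γ}).IsTree

/-- All jumps of the linking target `1`-occurrences. -/
def TargetsOnes (Γ : Sequent) (lk : Linking) : Prop :=
  ∀ a, IsBotName Γ a → IsOneName Γ (lk a)

/-- Two correct linkings describe the same proof net (they agree on all jumps). -/
def SameNet (Γ : Sequent) (lk lk' : Linking) : Prop :=
  Correct Γ lk ∧ Correct Γ lk' ∧ ∀ a, IsBotName Γ a → lk a = lk' a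

/-- A rewiring step between proof nets: the target of exactly one jump is changed. -/
def Rewire (Γ : Sequent) (lk lk' : Linking) : Prop :=
  Correct Γ lk ∧ Correct Γ lk' ∧
  ∃ a, IsBotName Γ a ∧ lk a ≠ lk' a ∧ ∀ b, IsBotName Γ b → b ≠ a → lk b = lk' b

/-- Equivalence of proof nets over `Γ`: the equivalence relation generated by rewiring. -/
def NetEquiv (Γ : Sequent) : Linking → Linking → Prop :=
  Relation.EqvGen (fun lk lk' => SameNet Γ lk lk' ∨ Rewire Γ lk lk')

end MLL

namespace MLL

/-- `Δ` is a sub-sequent of `Γ`: a multiset of pairwise disjoint subformula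
occurrences of `Γ` (names are preserved). -/
def SubSeq (Γ Δ : Sequent) : Prop :=
  (∀ A ∈ Δ, HasSub Γ A) ∧ Δ.Pairwise (fun A B => Disjoint A.names B.names)

/-- `(Δ, lk↾Δ)` is a subnet of `(Γ, lk)`: `Δ ≤ Γ` and the restriction of the
linking to `Δ` is correct.  (Correctness of a linking only depends on its
values on the `⊥`-occurrences of the sequent, so the restriction is `lk` itself.) -/
def Subnet (Γ : Sequent) (lk : Linking) (Δ : Sequent) : Prop :=
  SubSeq Γ Δ ∧ Correct Δ lk

/-- `v` is a port of the sub-sequent `Δ`, i.e. a root vertex of `Δ`. -/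
def IsPort (Δ : Sequent) (v : ℕ) : Prop := ∃ A ∈ Δ, A.name = v

/-- `Δ ≤ Δ'` for sub-sequents: every formula of `Δ` is a subformula of a
formula of `Δ'`. -/
def SeqLE (Δ Δ' : Sequent) : Prop := ∀ A ∈ Δ, ∃ B ∈ Δ', A ∈ B.subs

/-- `Δ` is the empire of `v` in `(Γ, lk)`: the largest subnet having `v`
as a port. -/
def IsEmpire (Γ : Sequent) (lk : Linking) (v : ℕ) (Δ : Sequent) : Prop :=
  Subnet Γ lk Δ ∧ IsPort Δ v ∧
  ∀ Δ', Subnet Γ lk Δ' → IsPort Δ' v → SeqLE Δ' Δ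

end MLL

/-!
Fix any switching. In the switching graph of `Γ` the tensor yields the path `A — c — B`, and
since this graph is a tree, every walk from `A` to `B` passes through `c`. A subnet is connected
in its own switching graph, which is a subgraph of that of `Γ`, so a name shared by `Δ₁` and `Δ₂`
would give a walk from `A` to `B` inside the names of `Δ₁` and `Δ₂`. But `c` is a name of neither:
it names a strict superformula of the port `A` (resp. `B`), and the formulas of a sub-sequent
are pairwise disjoint.
-/

namespace SimpleGraph

variable {V : Type*} {G : SimpleGraph V}

theorem IsAcyclic.mem_support_of_adj_of_adj (hG : G.IsAcyclic) {u c v : V}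
    (huc : G.Adj u c) (hcv : G.Adj c v) (huv : u ≠ v) (w : G.Walk u v) : c ∈ w.support := by
  classical
  have hpath : (Walk.cons huc (Walk.cons hcv Walk.nil)).IsPath := by
    simp [huc.ne, hcv.ne, huv]
  have := (hG.subsingleton_path u v).elim ⟨_, hpath⟩ w.toPath
  exact w.support_toPath_subset_support (by simp [← this])

end SimpleGraph

namespace MLL

namespace Formula

theorem mem_subs_self (F : Formula) : F ∈ F.subs := by
  cases F <;> simp [subs]

theorem head?_subs (F : Formula) : F.subs.head? = some F := by
  cases F <;> rfl

theorem subs_sublist_of_mem_subs {F G : Formula} (h : F ∈ G.subs) : F.subs.Sublist G.subs := by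
  induction G with
  | one | bot => simp only [subs, List.mem_singleton] at h; rw [h]
  | parr n A B ihA ihB | tens n A B ihA ihB =>
    simp only [subs, List.mem_cons, List.mem_append] at h ⊢
    rcases h with rfl | h | h
    · rfl
    · exact ((ihA h).trans (List.sublist_append_left _ _)).cons _
    · exact ((ihB h).trans (List.sublist_append_right _ _)).cons _

theorem mem_subs_trans {F G H : Formula} (hF : F ∈ G.subs) (hG : G ∈ H.subs) : F ∈ H.subs :=
  (subs_sublist_of_mem_subs hG).subset hF

theorem eq_of_mem_subs_of_mem_subs {F G : Formula} (hF : F ∈ G.subs) (hG : G ∈ F.subs) :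
    F = G := by
  have h := (subs_sublist_of_mem_subs hF).antisymm (subs_sublist_of_mem_subs hG)
  simpa [head?_subs] using congrArg List.head? h

theorem names_eq_toFinset (F : Formula) : F.names = (F.subs.map name).toFinset := by
  induction F with
  | one | bot => simp [names, subs, name]
  | parr n A B ihA ihB | tens n A B ihA ihB =>
    simp [names, subs, name, ihA, ihB, List.toFinset_append]

theorem mem_names_iff {F : Formula} {n : ℕ} : n ∈ F.names ↔ ∃ G ∈ F.subs, G.name = n := by
  simp [names_eq_toFinset]

theorem name_mem_names (F : Formula) : F.name ∈ F.names :=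
  mem_names_iff.2 ⟨F, F.mem_subs_self, rfl⟩

theorem names_subset_of_mem_subs {F G : Formula} (h : F ∈ G.subs) : F.names ⊆ G.names := by
  intro n hn
  obtain ⟨H, hH, rfl⟩ := mem_names_iff.1 hn
  exact mem_names_iff.2 ⟨H, mem_subs_trans hH h, rfl⟩

end Formula

theorem subs_le_seqSubs {Γ : Sequent} {F : Formula} (h : HasSub Γ F) :
    (F.subs : Multiset Formula) ≤ seqSubs Γ := by
  obtain ⟨G, hG, hF⟩ := Multiset.mem_bind.1 h
  exact (Multiset.coe_le.2 (Formula.subs_sublist_of_mem_subs hF).subperm).trans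
    (Multiset.le_bind Γ hG)

theorem HasSub.of_mem_subs {Γ : Sequent} {F G : Formula} (hG : HasSub Γ G) (hF : F ∈ G.subs) :
    HasSub Γ F :=
  Multiset.mem_of_le (subs_le_seqSubs hG) hF

theorem mem_seqNames {Δ : Sequent} {n : ℕ} : n ∈ seqNames Δ ↔ ∃ F ∈ Δ, n ∈ F.names := by
  unfold seqNames
  induction Δ using Multiset.induction with
  | empty => simp
  | cons F Δ ih => simp [ih]

theorem HasSub.names_subset {Γ : Sequent} {F : Formula} (h : HasSub Γ F) :
    F.names ⊆ seqNames Γ := by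
  obtain ⟨G, hG, hF⟩ := Multiset.mem_bind.1 h
  exact fun n hn => mem_seqNames.2 ⟨G, hG, Formula.names_subset_of_mem_subs hF hn⟩

theorem IsPort.mem_seqNames {Δ : Sequent} {v : ℕ} (h : IsPort Δ v) : v ∈ seqNames Δ := by
  obtain ⟨F, hF, rfl⟩ := h
  exact MLL.mem_seqNames.2 ⟨F, hF, F.name_mem_names⟩

namespace WellNamed

variable {Γ : Sequent}

theorem eq_of_name_eq (hW : WellNamed Γ) {F G : Formula} (hF : HasSub Γ F) (hG : HasSub Γ G)
    (h : F.name = G.name) : F = G :=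
  Multiset.inj_on_of_nodup_map hW _ hF _ hG h

theorem tens_names_ne (hW : WellNamed Γ) {c : ℕ} {A B : Formula} (hT : HasSub Γ (.tens c A B)) :
    c ≠ A.name ∧ c ≠ B.name ∧ A.name ≠ B.name := by
  have hnd : ((Formula.tens c A B).subs.map Formula.name).Nodup := by
    simpa using Multiset.nodup_of_le (Multiset.map_le_map (subs_le_seqSubs hT)) hW
  simp only [Formula.subs, List.map_cons, List.map_append, List.nodup_cons, List.nodup_append,
    List.mem_append, List.mem_map, not_or] at hnd
  obtain ⟨⟨hcA, hcB⟩, -, -, hAB⟩ := hnd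
  exact ⟨fun h => hcA ⟨A, A.mem_subs_self, h.symm⟩, fun h => hcB ⟨B, B.mem_subs_self, h.symm⟩,
    hAB _ ⟨A, A.mem_subs_self, rfl⟩ _ ⟨B, B.mem_subs_self, rfl⟩⟩

end WellNamed

namespace SubSeq

variable {Γ Δ : Sequent}

theorem hasSub (h : SubSeq Γ Δ) {F : Formula} (hF : HasSub Δ F) : HasSub Γ F := by
  obtain ⟨G, hG, hFG⟩ := Multiset.mem_bind.1 hF
  exact (h.1 G hG).of_mem_subs hFG

theorem seqNames_subset (h : SubSeq Γ Δ) : seqNames Δ ⊆ seqNames Γ := by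
  intro n hn
  obtain ⟨F, hF, hnF⟩ := mem_seqNames.1 hn
  exact (h.1 F hF).names_subset hnF

theorem disjoint_names (h : SubSeq Γ Δ) {F G : Formula} (hF : F ∈ Δ) (hG : G ∈ Δ) (hFG : F ≠ G) :
    Disjoint F.names G.names :=
  have : Std.Symm fun F G : Formula => Disjoint F.names G.names := ⟨fun _ _ hd => hd.symm⟩
  h.2.forall hF hG hFG

theorem switchGraph_le (h : SubSeq Γ Δ) (lk : Linking) (σ : Switching) :
    switchGraph Δ lk σ ≤ switchGraph Γ lk σ := by
  intro x y hxy
  rw [switchGraph, SimpleGraph.fromRel_adj] at hxy ⊢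
  refine ⟨hxy.1, hxy.2.imp ?_ ?_⟩ <;>
    rintro (⟨A, B, hT, hy⟩ | ⟨A, B, hP, hy⟩ | ⟨hb, hy⟩)
  all_goals first
    | exact Or.inl ⟨A, B, h.hasSub hT, hy⟩
    | exact Or.inr (Or.inl ⟨A, B, h.hasSub hP, hy⟩)
    | exact Or.inr (Or.inr ⟨h.hasSub hb, hy⟩)

/-- A formula of `Δ` containing `T` would also contain the port `D`, against the disjointness
of the formulas of `Δ`. -/
theorem name_notMem_seqNames_of_isPort (h : SubSeq Γ Δ) (hW : WellNamed Γ) {T D : Formula}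
    (hT : HasSub Γ T) (hD : D ∈ T.subs) (hDT : D.name ≠ T.name) (hp : IsPort Δ D.name) :
    T.name ∉ seqNames Δ := by
  obtain ⟨D', hD'Δ, hD'⟩ := hp
  obtain rfl : D' = D := hW.eq_of_name_eq (h.1 D' hD'Δ) (hT.of_mem_subs hD) hD'
  intro hTΔ
  obtain ⟨F, hFΔ, hTF⟩ := mem_seqNames.1 hTΔ
  obtain ⟨T', hT'F, hT'⟩ := Formula.mem_names_iff.1 hTF
  obtain rfl : T' = T := hW.eq_of_name_eq ((h.1 F hFΔ).of_mem_subs hT'F) hT hT'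
  by_cases hFD : F = D'
  · subst hFD
    exact hDT (congrArg Formula.name (Formula.eq_of_mem_subs_of_mem_subs hD hT'F))
  · refine Finset.disjoint_left.1 (h.disjoint_names hD'Δ hFΔ (Ne.symm hFD)) D'.name_mem_names ?_
    exact Formula.names_subset_of_mem_subs (Formula.mem_subs_trans hD hT'F) D'.name_mem_names

end SubSeq

theorem switchGraph_adj_of_tens {Γ : Sequent} (lk : Linking) (σ : Switching) {c y : ℕ}
    {A B : Formula} (hT : HasSub Γ (.tens c A B)) (hy : y = A.name ∨ y = B.name) (hcy : c ≠ y) :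
    (switchGraph Γ lk σ).Adj c y := by
  rw [switchGraph, SimpleGraph.fromRel_adj]
  exact ⟨hcy, Or.inl (Or.inl ⟨A, B, hT, hy⟩)⟩

theorem Subnet.exists_walk {Γ Δ : Sequent} {lk : Linking} (h : Subnet Γ lk Δ) (σ : Switching)
    (x y : {n : ℕ | n ∈ seqNames Γ}) (hx : x.1 ∈ seqNames Δ) (hy : y.1 ∈ seqNames Δ) :
    ∃ w : ((switchGraph Γ lk σ).induce {n | n ∈ seqNames Γ}).Walk x y,
      ∀ z ∈ w.support, z.1 ∈ seqNames Δ := by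
  obtain ⟨w⟩ := (h.2.2 σ).connected.preconnected ⟨x, hx⟩ ⟨y, hy⟩
  let f := SimpleGraph.induceHom (s := {n | n ∈ seqNames Δ}) (t := {n | n ∈ seqNames Γ})
    (SimpleGraph.Hom.ofLE (h.1.switchGraph_le lk σ)) (fun _ hn => h.1.seqNames_subset hn)
  refine ⟨w.map f, fun z hz => ?_⟩
  obtain ⟨z', -, rfl⟩ := List.mem_map.1 (w.support_map f ▸ hz)
  exact z'.2

end MLL

open MLL in
/-- In a proof net, if `v` and `w` are joined by a tensor (they
are the roots of the two immediate subformulas of a tensor occurrence), then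
any two subnets of which they are respective ports are disjoint. -/
theorem mll_tensor_disjoint_subnets {Γ : Sequent} (hW : WellNamed Γ)
    (lk : Linking) (hC : Correct Γ lk)
    {c : ℕ} {A B : Formula} (hT : HasSub Γ (.tens c A B))
    {Δ₁ Δ₂ : Sequent} (h₁ : Subnet Γ lk Δ₁) (h₂ : Subnet Γ lk Δ₂)
    (hp₁ : IsPort Δ₁ A.name) (hp₂ : IsPort Δ₂ B.name) :
    Disjoint (seqNames Δ₁) (seqNames Δ₂) := by
  rw [Finset.disjoint_left]
  intro n hn₁ hn₂
  obtain ⟨hcA, hcB, hAB⟩ := hW.tens_names_ne hT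
  have hAT : A ∈ (Formula.tens c A B).subs := by simp [Formula.subs, A.mem_subs_self]
  have hBT : B ∈ (Formula.tens c A B).subs := by simp [Formula.subs, B.mem_subs_self]
  have mem_Γ {F : Formula} (hF : F ∈ (Formula.tens c A B).subs) : F.name ∈ seqNames Γ :=
    (hT.of_mem_subs hF).names_subset F.name_mem_names
  -- the tensor edges `A — c — B` are present in every switching graph
  let σ : Switching := fun _ => true
  let G := (switchGraph Γ lk σ).induce {x | x ∈ seqNames Γ}
  let a : {x | x ∈ seqNames Γ} := ⟨A.name, mem_Γ hAT⟩
  let b : {x | x ∈ seqNames Γ} := ⟨B.name, mem_Γ hBT⟩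
  let v : {x | x ∈ seqNames Γ} := ⟨c, mem_Γ (Formula.tens c A B).mem_subs_self⟩
  obtain ⟨w₁, hw₁⟩ := h₁.exists_walk σ a ⟨n, h₁.1.seqNames_subset hn₁⟩ hp₁.mem_seqNames hn₁
  obtain ⟨w₂, hw₂⟩ := h₂.exists_walk σ ⟨n, h₂.1.seqNames_subset hn₂⟩ b hn₂ hp₂.mem_seqNames
  have hav : G.Adj a v := (switchGraph_adj_of_tens lk σ hT (.inl rfl) hcA).symm
  have hvb : G.Adj v b := switchGraph_adj_of_tens lk σ hT (.inr rfl) hcB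
  have hv := (hC.2 σ).isAcyclic.mem_support_of_adj_of_adj hav hvb
    (fun h => hAB (congrArg Subtype.val h)) (w₁.append w₂)
  rw [SimpleGraph.Walk.support_append, List.mem_append] at hv
  rcases hv with hv | hv
  · exact h₁.1.name_notMem_seqNames_of_isPort hW hT hAT hcA.symm hp₁ (hw₁ v hv)
  · exact h₂.1.name_notMem_seqNames_of_isPort hW hT hBT hcB.symm hp₂
      (hw₂ v (List.mem_of_mem_tail hv))
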